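/- arXiv:1605.01794 — 7 statements merged into one kernel-verified Lean document; each statement's English description precedes it below -/
import Mathlib

section
/- Let a, b, c : ℕ → (0, ∞) and lᵃ, lᵇ, lᶜ : ℕ → [0, ∞) be sequences such that for every n: sinh(a_n/2) = sinh(a_{n+1})·cosh(lᵃ_n) with sinh(lᵃ_n) ≤ max(sinh(b_n/2), sinh(c_n/2)); sinh(b_n/2) = sinh(b_{n+1})·cosh(lᵇ_n) with sinh(lᵇ_n) ≤ max(sinh(c_n/2), sinh(a_n/2)); and sinh(c_n/2) = sinh(c_{n+1})·cosh(lᶜ_n) with sinh(lᶜ_n) ≤ max(sinh(a_n/2), sinh(b_n/2)). Assume moreover sinh(a_0/2) < 1, sinh(b_0/2) < 1 and sinh(c_0/2) < 1. Then for every n ≥ 1 one has e^{-3/2}·2^{-n}·sinh(a_0/2) < sinh(a_n/2) < 2^{-n}·sinh(a_0/2) (and the analogous two-sided bounds for b_n and c_n). -/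
open Real

/-- `cosh x ≤ exp (t^2/2)` whenever `0 ≤ sinh x ≤ t`. -/
lemma aux_cosh_le_exp {x t : ℝ} (hx : 0 ≤ Real.sinh x) (h : Real.sinh x ≤ t) :
    Real.cosh x ≤ Real.exp (t ^ 2 / 2) := by
  have hsq : Real.exp (t ^ 2 / 2) ^ 2 = Real.exp (t ^ 2) := by
    rw [sq, ← Real.exp_add]; ring_nf
  have h1 : Real.sinh x ^ 2 ≤ t ^ 2 := pow_le_pow_left₀ hx h 2
  have h2 : t ^ 2 + 1 ≤ Real.exp (t ^ 2) := Real.add_one_le_exp _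
  have h3 : Real.cosh x ^ 2 = Real.sinh x ^ 2 + 1 := Real.cosh_sq x
  nlinarith [Real.cosh_pos x, Real.exp_pos (t ^ 2 / 2)]

/-- One subdivision step halves the sinh of the half-edge (strictly). -/
lemma aux_step {x l : ℕ → ℝ} (hx : ∀ n, 0 < x n) (hl : ∀ n, 0 ≤ l n)
    (h : ∀ n, Real.sinh (x n / 2) = Real.sinh (x (n + 1)) * Real.cosh (l n)) (n : ℕ) :
    2 * Real.sinh (x (n + 1) / 2) < Real.sinh (x n / 2) := by
  have hrec := h n
  have hdbl : Real.sinh (x (n + 1)) =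
      2 * Real.sinh (x (n + 1) / 2) * Real.cosh (x (n + 1) / 2) := by
    have : x (n + 1) = 2 * (x (n + 1) / 2) := by ring
    rw [this, Real.sinh_two_mul]; ring_nf
  have hspos : 0 < Real.sinh (x (n + 1) / 2) :=
    Real.sinh_pos_iff.mpr (by have := hx (n + 1); positivity)
  have hc1 : 1 < Real.cosh (x (n + 1) / 2) := by
    rw [Real.one_lt_cosh]
    have := hx (n + 1); positivity
  have hc2 : 1 ≤ Real.cosh (l n) := Real.one_le_cosh _
  calc 2 * Real.sinh (x (n + 1) / 2)
      < 2 * Real.sinh (x (n + 1) / 2) * (Real.cosh (x (n + 1) / 2) * Real.cosh (l n)) := by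
        have ht : 1 < Real.cosh (x (n + 1) / 2) * Real.cosh (l n) := by nlinarith
        nlinarith
    _ = Real.sinh (x n / 2) := by rw [hrec, hdbl]; ring

/-- Geometric upper bound (non-strict, all `n`). -/
lemma aux_upper {x l : ℕ → ℝ} (hx : ∀ n, 0 < x n) (hl : ∀ n, 0 ≤ l n)
    (h : ∀ n, Real.sinh (x n / 2) = Real.sinh (x (n + 1)) * Real.cosh (l n)) :
    ∀ n, Real.sinh (x n / 2) ≤ (1 / 2 : ℝ) ^ n * Real.sinh (x 0 / 2) := by
  intro n
  induction n with
  | zero => simp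
  | succ m ih =>
    have hstep := aux_step hx hl h m
    rw [pow_succ]
    nlinarith

/-- Geometric upper bound, strict for `n ≥ 1`. -/
lemma aux_upper_strict {x l : ℕ → ℝ} (hx : ∀ n, 0 < x n) (hl : ∀ n, 0 ≤ l n)
    (h : ∀ n, Real.sinh (x n / 2) = Real.sinh (x (n + 1)) * Real.cosh (l n)) :
    ∀ n, 1 ≤ n → Real.sinh (x n / 2) < (1 / 2 : ℝ) ^ n * Real.sinh (x 0 / 2) := by
  intro n hn
  obtain ⟨m, rfl⟩ := Nat.exists_eq_add_of_le hn
  have hstep := aux_step hx hl h m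
  have hub := aux_upper hx hl h m
  rw [show 1 + m = m + 1 from by ring, pow_succ]
  nlinarith [pow_pos (by norm_num : (0:ℝ) < 1 / 2) m]

/-- Lower bound with explicit correction factor. -/
lemma aux_lower {x l : ℕ → ℝ} (hx : ∀ n, 0 < x n) (hl : ∀ n, 0 ≤ l n)
    (h : ∀ n, Real.sinh (x n / 2) = Real.sinh (x (n + 1)) * Real.cosh (l n))
    (hlbound : ∀ n, Real.sinh (l n) ≤ (1 / 2 : ℝ) ^ n)
    (hxbound : ∀ n, Real.sinh (x n / 2) ≤ (1 / 2 : ℝ) ^ n) :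
    ∀ n, (1 / 2 : ℝ) ^ n * Real.sinh (x 0 / 2) *
        Real.exp (-(5 / 6) * (1 - (1 / 4 : ℝ) ^ n)) ≤ Real.sinh (x n / 2) := by
  intro n
  induction n with
  | zero => simp
  | succ m ih =>
    -- the exact recurrence
    have hrec := h m
    have hdbl : Real.sinh (x (m + 1)) =
        2 * Real.sinh (x (m + 1) / 2) * Real.cosh (x (m + 1) / 2) := by
      have : x (m + 1) = 2 * (x (m + 1) / 2) := by ring
      rw [this, Real.sinh_two_mul]; ring_nf
    -- bounds on the two cosh factors
    have hc1 : Real.cosh (x (m + 1) / 2) ≤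
        Real.exp (((1 / 2 : ℝ) ^ (m + 1)) ^ 2 / 2) :=
      aux_cosh_le_exp (Real.sinh_nonneg_iff.mpr (le_of_lt (by have := hx (m + 1); positivity)))
        (hxbound (m + 1))
    have hc2 : Real.cosh (l m) ≤ Real.exp (((1 / 2 : ℝ) ^ m) ^ 2 / 2) :=
      aux_cosh_le_exp (Real.sinh_nonneg_iff.mpr (hl m)) (hlbound m)
    have hspos : 0 < Real.sinh (x (m + 1) / 2) :=
      Real.sinh_pos_iff.mpr (by have := hx (m + 1); positivity)
    have hx0pos : 0 < Real.sinh (x 0 / 2) :=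
      Real.sinh_pos_iff.mpr (by have := hx 0; positivity)
    -- combined bound on the denominator
    set D : ℝ := Real.exp (((1 / 2 : ℝ) ^ (m + 1)) ^ 2 / 2) *
        Real.exp (((1 / 2 : ℝ) ^ m) ^ 2 / 2) with hD
    have hDpos : 0 < D := by positivity
    have hcc : Real.cosh (x (m + 1) / 2) * Real.cosh (l m) ≤ D := by
      have h1 := Real.cosh_pos (x (m + 1) / 2)
      have h2 := Real.cosh_pos (l m)
      have h3 := Real.exp_pos (((1 / 2 : ℝ) ^ (m + 1)) ^ 2 / 2)
      nlinarith
    -- sinh (x m / 2) = 2 * sinh (x (m+1)/2) * (cosh * cosh)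
    have key : Real.sinh (x m / 2) ≤ 2 * Real.sinh (x (m + 1) / 2) * D := by
      rw [hrec, hdbl]
      nlinarith
    -- now chain with ih
    have e1 : (1 / 2 : ℝ) ^ m * Real.sinh (x 0 / 2) *
        Real.exp (-(5 / 6) * (1 - (1 / 4 : ℝ) ^ m)) ≤ 2 * Real.sinh (x (m + 1) / 2) * D :=
      le_trans ih key
    -- divide by 2 D
    have goal_eq : (1 / 2 : ℝ) ^ (m + 1) * Real.sinh (x 0 / 2) *
        Real.exp (-(5 / 6) * (1 - (1 / 4 : ℝ) ^ (m + 1))) * (2 * D) ≤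
        (1 / 2 : ℝ) ^ m * Real.sinh (x 0 / 2) *
        Real.exp (-(5 / 6) * (1 - (1 / 4 : ℝ) ^ m)) := by
      have hexp : Real.exp (-(5 / 6) * (1 - (1 / 4 : ℝ) ^ (m + 1))) * (2 * D) ≤
          2 * Real.exp (-(5 / 6) * (1 - (1 / 4 : ℝ) ^ m)) := by
        have : Real.exp (-(5 / 6) * (1 - (1 / 4 : ℝ) ^ (m + 1))) * D ≤
            Real.exp (-(5 / 6) * (1 - (1 / 4 : ℝ) ^ m)) := by
          rw [hD, ← Real.exp_add, ← Real.exp_add]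
          apply Real.exp_le_exp.mpr
          have h14 : ∀ k : ℕ, ((1 / 2 : ℝ) ^ k) ^ 2 = (1 / 4 : ℝ) ^ k := fun k => by
            rw [← pow_mul, mul_comm, pow_mul]; norm_num
          rw [h14, h14, pow_succ]
          ring_nf
          nlinarith [pow_nonneg (by norm_num : (0:ℝ) ≤ 1 / 4) m]
        linarith
      calc (1 / 2 : ℝ) ^ (m + 1) * Real.sinh (x 0 / 2) *
            Real.exp (-(5 / 6) * (1 - (1 / 4 : ℝ) ^ (m + 1))) * (2 * D)
          = (1 / 2 : ℝ) ^ (m + 1) * Real.sinh (x 0 / 2) *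
            (Real.exp (-(5 / 6) * (1 - (1 / 4 : ℝ) ^ (m + 1))) * (2 * D)) := by ring
        _ ≤ (1 / 2 : ℝ) ^ (m + 1) * Real.sinh (x 0 / 2) *
            (2 * Real.exp (-(5 / 6) * (1 - (1 / 4 : ℝ) ^ m))) := by
            apply mul_le_mul_of_nonneg_left hexp
            positivity
        _ = (1 / 2 : ℝ) ^ m * Real.sinh (x 0 / 2) *
            Real.exp (-(5 / 6) * (1 - (1 / 4 : ℝ) ^ m)) := by
            rw [pow_succ]; ring
    -- combine: LHS * (2D) ≤ ... ≤ 2 sinh * D = sinh * (2D)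
    have final : (1 / 2 : ℝ) ^ (m + 1) * Real.sinh (x 0 / 2) *
        Real.exp (-(5 / 6) * (1 - (1 / 4 : ℝ) ^ (m + 1))) * (2 * D) ≤
        Real.sinh (x (m + 1) / 2) * (2 * D) := by
      calc _ ≤ (1 / 2 : ℝ) ^ m * Real.sinh (x 0 / 2) *
            Real.exp (-(5 / 6) * (1 - (1 / 4 : ℝ) ^ m)) := goal_eq
        _ ≤ 2 * Real.sinh (x (m + 1) / 2) * D := e1
        _ = Real.sinh (x (m + 1) / 2) * (2 * D) := by ring
    exact le_of_mul_le_mul_right final (by positivity)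

/-- Lemma 2.1 of the paper (with the constant `e^{-3/2}`, i.e. the case σ = 1):
two-sided geometric bounds for the iterated edge lengths. -/
theorem edge_length_two_sided_estimate
    (a b c la lb lc : ℕ → ℝ)
    (hapos : ∀ n, 0 < a n) (hbpos : ∀ n, 0 < b n) (hcpos : ∀ n, 0 < c n)
    (hla : ∀ n, 0 ≤ la n) (hlb : ∀ n, 0 ≤ lb n) (hlc : ∀ n, 0 ≤ lc n)
    (ha : ∀ n, Real.sinh (a n / 2) = Real.sinh (a (n + 1)) * Real.cosh (la n))
    (ha' : ∀ n, Real.sinh (la n) ≤ max (Real.sinh (b n / 2)) (Real.sinh (c n / 2)))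
    (hb : ∀ n, Real.sinh (b n / 2) = Real.sinh (b (n + 1)) * Real.cosh (lb n))
    (hb' : ∀ n, Real.sinh (lb n) ≤ max (Real.sinh (c n / 2)) (Real.sinh (a n / 2)))
    (hc : ∀ n, Real.sinh (c n / 2) = Real.sinh (c (n + 1)) * Real.cosh (lc n))
    (hc' : ∀ n, Real.sinh (lc n) ≤ max (Real.sinh (a n / 2)) (Real.sinh (b n / 2)))
    (ha0 : Real.sinh (a 0 / 2) < 1) (hb0 : Real.sinh (b 0 / 2) < 1)
    (hc0 : Real.sinh (c 0 / 2) < 1) :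
    ∀ n : ℕ, 1 ≤ n →
      (Real.exp (-(3 / 2)) * ((1 / 2) ^ n * Real.sinh (a 0 / 2)) < Real.sinh (a n / 2) ∧
        Real.sinh (a n / 2) < (1 / 2) ^ n * Real.sinh (a 0 / 2)) ∧
      (Real.exp (-(3 / 2)) * ((1 / 2) ^ n * Real.sinh (b 0 / 2)) < Real.sinh (b n / 2) ∧
        Real.sinh (b n / 2) < (1 / 2) ^ n * Real.sinh (b 0 / 2)) ∧
      (Real.exp (-(3 / 2)) * ((1 / 2) ^ n * Real.sinh (c 0 / 2)) < Real.sinh (c n / 2) ∧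
        Real.sinh (c n / 2) < (1 / 2) ^ n * Real.sinh (c 0 / 2)) := by
  -- absolute bounds
  have hA : ∀ n, Real.sinh (a n / 2) ≤ (1 / 2 : ℝ) ^ n := fun n => by
    have h1 := aux_upper hapos hla ha n
    have h2 : (0:ℝ) < (1 / 2 : ℝ) ^ n := by positivity
    nlinarith
  have hB : ∀ n, Real.sinh (b n / 2) ≤ (1 / 2 : ℝ) ^ n := fun n => by
    have h1 := aux_upper hbpos hlb hb n
    have h2 : (0:ℝ) < (1 / 2 : ℝ) ^ n := by positivity
    nlinarith
  have hC : ∀ n, Real.sinh (c n / 2) ≤ (1 / 2 : ℝ) ^ n := fun n => by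
    have h1 := aux_upper hcpos hlc hc n
    have h2 : (0:ℝ) < (1 / 2 : ℝ) ^ n := by positivity
    nlinarith
  have hla' : ∀ n, Real.sinh (la n) ≤ (1 / 2 : ℝ) ^ n := fun n =>
    le_trans (ha' n) (max_le (hB n) (hC n))
  have hlb' : ∀ n, Real.sinh (lb n) ≤ (1 / 2 : ℝ) ^ n := fun n =>
    le_trans (hb' n) (max_le (hC n) (hA n))
  have hlc' : ∀ n, Real.sinh (lc n) ≤ (1 / 2 : ℝ) ^ n := fun n =>
    le_trans (hc' n) (max_le (hA n) (hB n))
  -- e^{-3/2} < correction factor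
  have hEfac : ∀ n : ℕ, Real.exp (-(3 / 2 : ℝ)) <
      Real.exp (-(5 / 6) * (1 - (1 / 4 : ℝ) ^ n)) := fun n => by
    apply Real.exp_lt_exp.mpr
    nlinarith [pow_nonneg (by norm_num : (0:ℝ) ≤ 1 / 4) n,
      pow_le_one₀ (by norm_num : (0:ℝ) ≤ 1 / 4) (by norm_num : (1/4:ℝ) ≤ 1) (n := n)]
  have combine : ∀ (x l : ℕ → ℝ), (∀ n, 0 < x n) → (∀ n, 0 ≤ l n) →
      (∀ n, Real.sinh (x n / 2) = Real.sinh (x (n + 1)) * Real.cosh (l n)) →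
      (∀ n, Real.sinh (l n) ≤ (1 / 2 : ℝ) ^ n) →
      (∀ n, Real.sinh (x n / 2) ≤ (1 / 2 : ℝ) ^ n) →
      ∀ n : ℕ, 1 ≤ n →
      Real.exp (-(3 / 2 : ℝ)) * ((1 / 2 : ℝ) ^ n * Real.sinh (x 0 / 2)) <
        Real.sinh (x n / 2) ∧
      Real.sinh (x n / 2) < (1 / 2 : ℝ) ^ n * Real.sinh (x 0 / 2) := by
    intro x l hx hl h hlb' hxb n hn
    refine ⟨?_, aux_upper_strict hx hl h n hn⟩
    have hlow := aux_lower hx hl h hlb' hxb n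
    have hx0pos : 0 < Real.sinh (x 0 / 2) :=
      Real.sinh_pos_iff.mpr (by have := hx 0; positivity)
    have hfac := hEfac n
    have hpos : (0:ℝ) < (1 / 2 : ℝ) ^ n * Real.sinh (x 0 / 2) := by positivity
    calc Real.exp (-(3 / 2 : ℝ)) * ((1 / 2 : ℝ) ^ n * Real.sinh (x 0 / 2))
        < Real.exp (-(5 / 6) * (1 - (1 / 4 : ℝ) ^ n)) *
          ((1 / 2 : ℝ) ^ n * Real.sinh (x 0 / 2)) := by
          exact mul_lt_mul_of_pos_right hfac hpos
      _ = (1 / 2 : ℝ) ^ n * Real.sinh (x 0 / 2) *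
          Real.exp (-(5 / 6) * (1 - (1 / 4 : ℝ) ^ n)) := by ring
      _ ≤ Real.sinh (x n / 2) := hlow
  intro n hn
  exact ⟨combine a la hapos hla ha hla' hA n hn,
    combine b lb hbpos hlb hb hlb' hB n hn,
    combine c lc hcpos hlc hc hlc' hC n hn⟩
end

section
/- Let a, b, b' > 0 be real numbers, let A, B, β ∈ (0, π), and let l be a real number with 0 < l < a/2. Assume: sin(β)·sinh(b') = sinh(a/2)·sin(B) (hyperbolic law of sines in the small triangle), sin(A)·sinh(b) = sinh(a)·sin(B) (hyperbolic law of sines in the big triangle), and sinh(b/2) = sinh(b')·cosh(l) (Lambert quadrilateral relation for the mid-line b'). Then cosh(b/2)/cosh(a/2) < sin(β)/sin(A) < cosh(b/2). -/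
open Real

/-- From the proof of Proposition 2.2: comparison of the angle `β` of a sub-triangle
with the angle `A` of the original hyperbolic triangle:
`cosh(b/2)/cosh(a/2) < sin β / sin A < cosh(b/2)`. -/
theorem angle_ratio_two_sided_bound
    (a b b' l : ℝ) (A B β : ℝ)
    (hapos : 0 < a) (hbpos : 0 < b) (hb'pos : 0 < b')
    (hA : A ∈ Set.Ioo 0 Real.pi) (hB : B ∈ Set.Ioo 0 Real.pi) (hβ : β ∈ Set.Ioo 0 Real.pi)
    (hl : 0 < l) (hl' : l < a / 2)
    (hsmall : Real.sin β * Real.sinh b' = Real.sinh (a / 2) * Real.sin B)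
    (hbig : Real.sin A * Real.sinh b = Real.sinh a * Real.sin B)
    (hlambert : Real.sinh (b / 2) = Real.sinh b' * Real.cosh l) :
    Real.cosh (b / 2) / Real.cosh (a / 2) < Real.sin β / Real.sin A ∧
      Real.sin β / Real.sin A < Real.cosh (b / 2) := by
  have hsA : 0 < Real.sin A := Real.sin_pos_of_pos_of_lt_pi hA.1 hA.2
  have hsb' : 0 < Real.sinh b' := by positivity
  have hca2 : 0 < Real.cosh (a / 2) := Real.cosh_pos _
  have hcb2 : 0 < Real.cosh (b / 2) := Real.cosh_pos _
  have hcl : 0 < Real.cosh l := Real.cosh_pos _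
  have ha2 : Real.sinh a = 2 * Real.sinh (a / 2) * Real.cosh (a / 2) := by
    have := Real.sinh_two_mul (a / 2); rw [show 2 * (a / 2) = a by ring] at this
    exact this
  have hb2 : Real.sinh b = 2 * Real.sinh (b / 2) * Real.cosh (b / 2) := by
    have := Real.sinh_two_mul (b / 2); rw [show 2 * (b / 2) = b by ring] at this
    exact this
  have hb2' : Real.sinh b = 2 * (Real.sinh b' * Real.cosh l) * Real.cosh (b / 2) := by
    rw [hb2, hlambert]
  have key : Real.sin β * Real.cosh (a / 2) * Real.sinh b'
      = Real.sin A * (Real.cosh (b / 2) * Real.cosh l) * Real.sinh b' := by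
    linear_combination Real.cosh (a / 2) * hsmall - (1 / 2) * hbig
      + (Real.sin A / 2) * hb2' - (Real.sin B / 2) * ha2
  have key' : Real.sin β * Real.cosh (a / 2)
      = Real.sin A * (Real.cosh (b / 2) * Real.cosh l) :=
    mul_right_cancel₀ (ne_of_gt hsb') key
  have hratio : Real.sin β / Real.sin A
      = Real.cosh (b / 2) * Real.cosh l / Real.cosh (a / 2) := by
    field_simp
    linarith [key']
  have h1 : 1 < Real.cosh l := Real.one_lt_cosh.2 (ne_of_gt hl)
  have h2 : Real.cosh l < Real.cosh (a / 2) := by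
    rw [Real.cosh_lt_cosh]
    rw [abs_of_pos hl, abs_of_pos (by linarith : (0:ℝ) < a / 2)]
    exact hl'
  rw [hratio]
  constructor
  · have : Real.cosh (b / 2) < Real.cosh (b / 2) * Real.cosh l := by nlinarith
    exact div_lt_div_of_pos_right this hca2
  · rw [div_lt_iff₀ hca2]
    exact (mul_lt_mul_iff_right₀ hcb2).2 h2
end

section
/- Let a, b, c, b', c' > 0 be real numbers, let A, α, S ∈ (0, π), and let l_b, l_c be real numbers with 0 < l_b < c/2 and 0 < l_c < b/2. Assume: sin(S/2)·cosh(a/2) = sinh(b/2)·sinh(c/2)·sin(A) (Cagnoli's formula), sin(S/2) = sinh(b')·sinh(c')·sin(α) (Keogh's formula), sinh(b/2) = sinh(b')·cosh(l_b) and sinh(c/2) = sinh(c')·cosh(l_c) (Lambert quadrilateral relations). Then 1/cosh(a/2) < sin(α)/sin(A) < cosh(b/2)·cosh(c/2). -/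
open Real

/-- From the proof of Proposition 2.2: comparison of the angle `α` of the middle
triangle with the angle `A` of the original hyperbolic triangle:
`1/cosh(a/2) < sin α / sin A < cosh(b/2) * cosh(c/2)`. -/
theorem middle_angle_ratio_two_sided_bound
    (a b c b' c' : ℝ) (A α S : ℝ) (lb lc : ℝ)
    (hapos : 0 < a) (hbpos : 0 < b) (hcpos : 0 < c)
    (hb'pos : 0 < b') (hc'pos : 0 < c')
    (hA : A ∈ Set.Ioo 0 Real.pi) (hα : α ∈ Set.Ioo 0 Real.pi) (hS : S ∈ Set.Ioo 0 Real.pi)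
    (hlb : 0 < lb) (hlb' : lb < c / 2) (hlc : 0 < lc) (hlc' : lc < b / 2)
    (hcagnoli : Real.sin (S / 2) * Real.cosh (a / 2)
      = Real.sinh (b / 2) * Real.sinh (c / 2) * Real.sin A)
    (hkeogh : Real.sin (S / 2) = Real.sinh b' * Real.sinh c' * Real.sin α)
    (hlambertb : Real.sinh (b / 2) = Real.sinh b' * Real.cosh lb)
    (hlambertc : Real.sinh (c / 2) = Real.sinh c' * Real.cosh lc) :
    1 / Real.cosh (a / 2) < Real.sin α / Real.sin A ∧
      Real.sin α / Real.sin A < Real.cosh (b / 2) * Real.cosh (c / 2) := by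
  have hsA : 0 < Real.sin A := Real.sin_pos_of_pos_of_lt_pi hA.1 hA.2
  have hsb' : 0 < Real.sinh b' := Real.sinh_pos_iff.mpr hb'pos
  have hsc' : 0 < Real.sinh c' := Real.sinh_pos_iff.mpr hc'pos
  have hca : 1 < Real.cosh (a / 2) := by
    rw [Real.one_lt_cosh]; positivity
  have hcapos : 0 < Real.cosh (a / 2) := by linarith
  have hclb : 1 < Real.cosh lb := by rw [Real.one_lt_cosh]; positivity
  have hclc : 1 < Real.cosh lc := by rw [Real.one_lt_cosh]; positivity
  have hclb' : Real.cosh lb < Real.cosh (c / 2) := by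
    rw [Real.cosh_lt_cosh, abs_of_pos hlb, abs_of_pos (by linarith : (0:ℝ) < c / 2)]
    exact hlb'
  have hclc' : Real.cosh lc < Real.cosh (b / 2) := by
    rw [Real.cosh_lt_cosh, abs_of_pos hlc, abs_of_pos (by linarith : (0:ℝ) < b / 2)]
    exact hlc'
  have key : Real.sin α * Real.cosh (a / 2) = Real.cosh lb * Real.cosh lc * Real.sin A := by
    have h := hcagnoli
    rw [hkeogh, hlambertb, hlambertc] at h
    have h2 : (Real.sinh b' * Real.sinh c') * (Real.sin α * Real.cosh (a / 2))
        = (Real.sinh b' * Real.sinh c') * (Real.cosh lb * Real.cosh lc * Real.sin A) := by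
      linear_combination h
    exact mul_left_cancel₀ (by positivity) h2
  have hratio : Real.sin α / Real.sin A = Real.cosh lb * Real.cosh lc / Real.cosh (a / 2) := by
    field_simp
    linarith [key]
  rw [hratio]
  constructor
  · rw [div_lt_div_iff₀ hcapos hcapos]
    have h1 : 1 < Real.cosh lb * Real.cosh lc := by nlinarith
    nlinarith [mul_lt_mul_of_pos_right h1 hcapos]
  · rw [div_lt_iff₀ hcapos]
    have h2 : Real.cosh lb * Real.cosh lc < Real.cosh (b / 2) * Real.cosh (c / 2) := by
      nlinarith
    have h3 : 0 < Real.cosh (b / 2) * Real.cosh (c / 2) := by positivity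
    nlinarith [mul_lt_mul_of_pos_left hca h3]
end

section
/- Let A : ℕ → (0, π) and a, b, c : ℕ → (0, ∞) be sequences such that for all n: sinh(a_n/2) ≤ 2^{-n}·sinh(a_0/2), sinh(b_n/2) ≤ 2^{-n}·sinh(b_0/2), sinh(c_n/2) ≤ 2^{-n}·sinh(c_0/2), and 1/cosh(a_n/2) < sin(A_{n+1})/sin(A_n) < cosh(b_n/2)·cosh(c_n/2). Then for all n and k one has |ln sin(A_{n+k}) − ln sin(A_n)| < 2^{-n}·(sinh²(a_0/2) + sinh²(b_0/2) + sinh²(c_0/2)); consequently the sequence (ln sin(A_n)) is Cauchy and (sin(A_n)) converges to a strictly positive limit. -/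
open Real Filter

private lemma log_cosh_le (x : ℝ) : Real.log (Real.cosh x) ≤ Real.sinh x ^ 2 / 2 := by
  have h1 : Real.cosh x ^ 2 = Real.sinh x ^ 2 + 1 := Real.cosh_sq x
  have h2 : Real.log (Real.cosh x ^ 2) ≤ Real.sinh x ^ 2 := by
    rw [h1]
    have := Real.log_le_sub_one_of_pos (x := Real.sinh x ^ 2 + 1) (by positivity)
    linarith
  rw [Real.log_pow] at h2
  push_cast at h2
  linarith

/-- The Cauchy estimate from the proof of Proposition 2.2: under geometric decay of the
edge lengths and the two-sided ratio bound for `sin A_n`, the sequence `ln sin A_n`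
is Cauchy with explicit modulus, and `sin A_n` converges to a strictly positive limit. -/
theorem log_sin_angle_cauchy
    (A a b c : ℕ → ℝ)
    (hA : ∀ n, A n ∈ Set.Ioo 0 Real.pi)
    (hapos : ∀ n, 0 < a n) (hbpos : ∀ n, 0 < b n) (hcpos : ∀ n, 0 < c n)
    (hadec : ∀ n, Real.sinh (a n / 2) ≤ (1 / 2) ^ n * Real.sinh (a 0 / 2))
    (hbdec : ∀ n, Real.sinh (b n / 2) ≤ (1 / 2) ^ n * Real.sinh (b 0 / 2))
    (hcdec : ∀ n, Real.sinh (c n / 2) ≤ (1 / 2) ^ n * Real.sinh (c 0 / 2))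
    (hratio : ∀ n, 1 / Real.cosh (a n / 2) < Real.sin (A (n + 1)) / Real.sin (A n) ∧
      Real.sin (A (n + 1)) / Real.sin (A n) < Real.cosh (b n / 2) * Real.cosh (c n / 2)) :
    (∀ n k : ℕ,
      |Real.log (Real.sin (A (n + k))) - Real.log (Real.sin (A n))|
        < (1 / 2) ^ n *
          (Real.sinh (a 0 / 2) ^ 2 + Real.sinh (b 0 / 2) ^ 2 + Real.sinh (c 0 / 2) ^ 2)) ∧
    CauchySeq (fun n => Real.log (Real.sin (A n))) ∧
    ∃ L : ℝ, 0 < L ∧ Tendsto (fun n => Real.sin (A n)) atTop (nhds L) := by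
  have hsin : ∀ n, 0 < Real.sin (A n) := fun n =>
    Real.sin_pos_of_pos_of_lt_pi (hA n).1 (hA n).2
  set s : ℕ → ℝ := fun n => Real.log (Real.sin (A n)) with hs
  set S : ℝ := Real.sinh (a 0 / 2) ^ 2 + Real.sinh (b 0 / 2) ^ 2 + Real.sinh (c 0 / 2) ^ 2
    with hSdef
  have ha0 : 0 < Real.sinh (a 0 / 2) := Real.sinh_pos_iff.2 (by linarith [hapos 0])
  have hS : 0 < S := by positivity
  have hpow : ∀ n : ℕ, ((1 / 2 : ℝ) ^ n) ^ 2 = (1 / 4) ^ n := by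
    intro n; rw [← pow_mul, mul_comm, pow_mul]; norm_num
  -- squared decay
  have hsq : ∀ (x : ℕ → ℝ), (∀ n, 0 < x n) →
      (∀ n, Real.sinh (x n / 2) ≤ (1 / 2) ^ n * Real.sinh (x 0 / 2)) →
      ∀ n, Real.sinh (x n / 2) ^ 2 ≤ (1 / 4) ^ n * Real.sinh (x 0 / 2) ^ 2 := by
    intro x hx hdec n
    have h1 : 0 < Real.sinh (x n / 2) := Real.sinh_pos_iff.2 (by linarith [hx n])
    have := pow_le_pow_left₀ h1.le (hdec n) 2
    rw [mul_pow, hpow] at this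
    exact this
  have step : ∀ n, |s (n + 1) - s n| ≤ (1 / 4) ^ n * (S / 2) := by
    intro n
    have hr : s (n + 1) - s n = Real.log (Real.sin (A (n + 1)) / Real.sin (A n)) := by
      rw [Real.log_div (hsin (n + 1)).ne' (hsin n).ne']
    have hrpos : 0 < Real.sin (A (n + 1)) / Real.sin (A n) := div_pos (hsin (n + 1)) (hsin n)
    have hca : 0 < Real.cosh (a n / 2) := Real.cosh_pos _
    have hcb : 0 < Real.cosh (b n / 2) := Real.cosh_pos _
    have hcc : 0 < Real.cosh (c n / 2) := Real.cosh_pos _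
    have hub : Real.log (Real.sin (A (n + 1)) / Real.sin (A n)) ≤
        Real.sinh (b n / 2) ^ 2 / 2 + Real.sinh (c n / 2) ^ 2 / 2 := by
      have h1 := Real.log_le_log hrpos (hratio n).2.le
      rw [Real.log_mul hcb.ne' hcc.ne'] at h1
      have h2 := log_cosh_le (b n / 2)
      have h3 := log_cosh_le (c n / 2)
      linarith
    have hlb : -(Real.sinh (a n / 2) ^ 2 / 2) ≤
        Real.log (Real.sin (A (n + 1)) / Real.sin (A n)) := by
      have h1 := Real.log_le_log (by positivity) (hratio n).1.le
      rw [one_div, Real.log_inv] at h1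
      have h2 := log_cosh_le (a n / 2)
      linarith
    have hsa := hsq a hapos hadec n
    have hsb := hsq b hbpos hbdec n
    have hsc := hsq c hcpos hcdec n
    have hq : (0:ℝ) ≤ (1/4)^n := by positivity
    rw [hr]
    rw [abs_le]
    constructor
    · have : (0:ℝ) ≤ Real.sinh (b 0 / 2) ^ 2 := by positivity
      have : (0:ℝ) ≤ Real.sinh (c 0 / 2) ^ 2 := by positivity
      nlinarith [sq_nonneg (Real.sinh (b 0 / 2)), sq_nonneg (Real.sinh (c 0 / 2))]
    · nlinarith [sq_nonneg (Real.sinh (a 0 / 2))]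
  have key : ∀ n k : ℕ, |s (n + k) - s n| < (1 / 2) ^ n * S := by
    intro n k
    have tel : s (n + k) - s n = ∑ j ∈ Finset.range k, (s (n + j + 1) - s (n + j)) := by
      induction k with
      | zero => simp
      | succ k ih =>
        rw [Finset.sum_range_succ, ← ih, show n + (k + 1) = n + k + 1 from rfl]
        ring
    have geom : ∑ j ∈ Finset.range k, ((1:ℝ)/4) ^ j ≤ 4 / 3 := by
      rw [geom_sum_eq (by norm_num : ((1:ℝ)/4) ≠ 1) k,
        div_le_iff_of_neg (by norm_num : ((1:ℝ)/4 - 1) < 0)]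
      have : (0:ℝ) ≤ (1/4:ℝ) ^ k := by positivity
      linarith
    have h14 : ((1:ℝ)/4) ^ n ≤ (1/2) ^ n :=
      pow_le_pow_left₀ (by norm_num) (by norm_num) n
    have h14pos : (0:ℝ) < (1/4:ℝ) ^ n := by positivity
    calc |s (n + k) - s n| ≤ ∑ j ∈ Finset.range k, |s (n + j + 1) - s (n + j)| := by
          rw [tel]; exact Finset.abs_sum_le_sum_abs _ _
      _ ≤ ∑ j ∈ Finset.range k, (1 / 4) ^ (n + j) * (S / 2) :=
          Finset.sum_le_sum fun j _ => step (n + j)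
      _ = (1 / 4) ^ n * (S / 2) * ∑ j ∈ Finset.range k, ((1:ℝ)/4) ^ j := by
          rw [Finset.mul_sum]
          exact Finset.sum_congr rfl fun j _ => by rw [pow_add]; ring
      _ ≤ (1 / 4) ^ n * (S / 2) * (4 / 3) := by
          apply mul_le_mul_of_nonneg_left geom (by positivity)
      _ < (1 / 2) ^ n * S := by
          linarith [mul_le_mul_of_nonneg_right h14 hS.le, mul_pos h14pos hS]
  refine ⟨key, ?_, ?_⟩
  · exact cauchySeq_of_le_geometric (1/4) (S/2) (by norm_num)
      fun n => by rw [Real.dist_eq, abs_sub_comm, mul_comm]; exact step n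
  · have hcs : CauchySeq s := cauchySeq_of_le_geometric (1/4) (S/2) (by norm_num)
      fun n => by rw [Real.dist_eq, abs_sub_comm, mul_comm]; exact step n
    obtain ⟨l, hl⟩ := cauchySeq_tendsto_of_complete hcs
    exact ⟨Real.exp l, Real.exp_pos l, by
      have : (fun n => Real.sin (A n)) = fun n => Real.exp (s n) := by
        funext n; rw [hs]; exact (Real.exp_log (hsin n)).symm
      rw [this]; exact (Real.continuous_exp.tendsto l).comp hl⟩
end

section
/- Let a, b, c > 0 be real numbers and let s, t ∈ (0, π). Put x = 2·cosh(a), y = 2·cosh(b), z = 2·cosh(c). Assume (2·cos(s/2))² = x² + y² + z² − x·y·z and (cos(t/2))² = (x + y + z + 2)²/((x + 2)(y + 2)(z + 2)). Then (sin(t/2))² = (1/16)·(sin(s/2))² / ((1 + sinh²(a/2))·(1 + sinh²(b/2))·(1 + sinh²(c/2))). -/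
open Real

/-- The trace-identity computation from the proof of Proposition 2.3:
if `x = 2cosh a`, `y = 2cosh b`, `z = 2cosh c`,
`(2 cos(s/2))² = x² + y² + z² − xyz` and
`(cos(t/2))² = (x+y+z+2)²/((x+2)(y+2)(z+2))`, then
`(sin(t/2))² = (1/16)·(sin(s/2))² / ((1+sinh²(a/2))(1+sinh²(b/2))(1+sinh²(c/2)))`. -/
theorem area_trace_identity
    (a b c s t : ℝ)
    (hapos : 0 < a) (hbpos : 0 < b) (hcpos : 0 < c)
    (hs : s ∈ Set.Ioo 0 Real.pi) (ht : t ∈ Set.Ioo 0 Real.pi)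
    (x y z : ℝ) (hx : x = 2 * Real.cosh a) (hy : y = 2 * Real.cosh b)
    (hz : z = 2 * Real.cosh c)
    (htrace : (2 * Real.cos (s / 2)) ^ 2 = x ^ 2 + y ^ 2 + z ^ 2 - x * y * z)
    (hmid : (Real.cos (t / 2)) ^ 2 = (x + y + z + 2) ^ 2 / ((x + 2) * (y + 2) * (z + 2))) :
    (Real.sin (t / 2)) ^ 2
      = (1 / 16) * (Real.sin (s / 2)) ^ 2 /
          ((1 + Real.sinh (a / 2) ^ 2) * (1 + Real.sinh (b / 2) ^ 2)
            * (1 + Real.sinh (c / 2) ^ 2)) := by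
  have ha2 : Real.cosh a = 1 + 2 * Real.sinh (a / 2) ^ 2 := by
    rw [show a = 2 * (a / 2) by ring, Real.cosh_two_mul, Real.cosh_sq]; ring
  have hb2 : Real.cosh b = 1 + 2 * Real.sinh (b / 2) ^ 2 := by
    rw [show b = 2 * (b / 2) by ring, Real.cosh_two_mul, Real.cosh_sq]; ring
  have hc2 : Real.cosh c = 1 + 2 * Real.sinh (c / 2) ^ 2 := by
    rw [show c = 2 * (c / 2) by ring, Real.cosh_two_mul, Real.cosh_sq]; ring
  have hpa : (0:ℝ) < 1 + Real.sinh (a / 2) ^ 2 := by positivity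
  have hpb : (0:ℝ) < 1 + Real.sinh (b / 2) ^ 2 := by positivity
  have hpc : (0:ℝ) < 1 + Real.sinh (c / 2) ^ 2 := by positivity
  have hD : (x + 2) * (y + 2) * (z + 2)
      = 64 * ((1 + Real.sinh (a / 2) ^ 2) * (1 + Real.sinh (b / 2) ^ 2)
          * (1 + Real.sinh (c / 2) ^ 2)) := by
    rw [hx, hy, hz, ha2, hb2, hc2]; ring
  have hDpos : (0:ℝ) < (x + 2) * (y + 2) * (z + 2) := by rw [hD]; positivity
  have hst : Real.sin (t / 2) ^ 2 = 1 - Real.cos (t / 2) ^ 2 := (Real.sin_sq _)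
  have hss : Real.sin (s / 2) ^ 2 = 1 - Real.cos (s / 2) ^ 2 := (Real.sin_sq _)
  set P := (1 + Real.sinh (a / 2) ^ 2) * (1 + Real.sinh (b / 2) ^ 2)
      * (1 + Real.sinh (c / 2) ^ 2) with hP
  have hPpos : (0:ℝ) < P := by positivity
  have key : 64 * P - (x + y + z + 2) ^ 2 = 4 - 4 * Real.cos (s / 2) ^ 2 := by
    linear_combination htrace - hD
  rw [hst, hmid, hss, hD]
  rw [show 1 - (x + y + z + 2) ^ 2 / (64 * P) = (64 * P - (x + y + z + 2) ^ 2) / (64 * P) by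
    field_simp, key]
  field_simp
  ring
end

section
/- Let S : ℕ → (0, π) and a, b, c : ℕ → (0, ∞) be sequences such that for every n ≥ 1: sinh(a_n/2) < 2^{-n}, sinh(b_n/2) < 2^{-n}, sinh(c_n/2) < 2^{-n}, and (sin(S_n/2))² = (1/16)·(sin(S_{n-1}/2))² / ((1 + sinh²(a_n/2))·(1 + sinh²(b_n/2))·(1 + sinh²(c_n/2))). Then for every n: (1/√e)·(1/4ⁿ)·sin(S_0/2) ≤ sin(S_n/2) ≤ (1/4ⁿ)·sin(S_0/2). -/
open Real

/-- Proposition 2.3 of the paper: two-sided bounds for the sine of the area of the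
iterated middle triangles:
`(1/√e)·4⁻ⁿ·sin(S₀/2) ≤ sin(Sₙ/2) ≤ 4⁻ⁿ·sin(S₀/2)`. -/
theorem middle_triangle_area_estimate
    (S a b c : ℕ → ℝ)
    (hS : ∀ n, S n ∈ Set.Ioo 0 Real.pi)
    (hapos : ∀ n, 0 < a n) (hbpos : ∀ n, 0 < b n) (hcpos : ∀ n, 0 < c n)
    (hadec : ∀ n : ℕ, 1 ≤ n → Real.sinh (a n / 2) < (1 / 2) ^ n)
    (hbdec : ∀ n : ℕ, 1 ≤ n → Real.sinh (b n / 2) < (1 / 2) ^ n)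
    (hcdec : ∀ n : ℕ, 1 ≤ n → Real.sinh (c n / 2) < (1 / 2) ^ n)
    (hrec : ∀ n : ℕ, 1 ≤ n →
      (Real.sin (S n / 2)) ^ 2
        = (1 / 16) * (Real.sin (S (n - 1) / 2)) ^ 2 /
            ((1 + Real.sinh (a n / 2) ^ 2) * (1 + Real.sinh (b n / 2) ^ 2)
              * (1 + Real.sinh (c n / 2) ^ 2))) :
    ∀ n : ℕ,
      (1 / Real.sqrt (Real.exp 1)) * (1 / 4 ^ n) * Real.sin (S 0 / 2) ≤ Real.sin (S n / 2) ∧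
        Real.sin (S n / 2) ≤ (1 / 4 ^ n) * Real.sin (S 0 / 2) := by
  have hsin : ∀ n, 0 < Real.sin (S n / 2) := by
    intro n
    obtain ⟨h0, h1⟩ := hS n
    have hπ := Real.pi_pos
    exact Real.sin_pos_of_pos_of_lt_pi (by linarith) (by linarith)
  have key : ∀ n : ℕ,
      (1/16 : ℝ)^n * Real.exp (-(1 - (1/4 : ℝ)^n)) * (Real.sin (S 0/2))^2
          ≤ (Real.sin (S n/2))^2 ∧
        (Real.sin (S n/2))^2 ≤ (1/16 : ℝ)^n * (Real.sin (S 0/2))^2 := by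
    intro n
    induction n with
    | zero => norm_num
    | succ n ih =>
      have hx := hadec (n+1) (by omega)
      have hy := hbdec (n+1) (by omega)
      have hz := hcdec (n+1) (by omega)
      have hr := hrec (n+1) (by omega)
      simp only [Nat.add_sub_cancel] at hr
      set x := Real.sinh (a (n+1)/2) with hxdef
      set y := Real.sinh (b (n+1)/2) with hydef
      set z := Real.sinh (c (n+1)/2) with hzdef
      have hxpos : 0 < x := Real.sinh_pos_iff.2 (by linarith [hapos (n+1)])
      have hypos : 0 < y := Real.sinh_pos_iff.2 (by linarith [hbpos (n+1)])
      have hzpos : 0 < z := Real.sinh_pos_iff.2 (by linarith [hcpos (n+1)])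
      set t : ℝ := (1/4 : ℝ)^(n+1) with htdef
      have htpos : 0 < t := by positivity
      have hsq : ((1/2:ℝ)^(n+1))^2 = t := by
        rw [htdef, show (1/4:ℝ) = (1/2:ℝ)^2 by norm_num, pow_right_comm]
      have hx2 : x^2 < t := by rw [← hsq]; exact pow_lt_pow_left₀ hx hxpos.le (by norm_num)
      have hy2 : y^2 < t := by rw [← hsq]; exact pow_lt_pow_left₀ hy hypos.le (by norm_num)
      have hz2 : z^2 < t := by rw [← hsq]; exact pow_lt_pow_left₀ hz hzpos.le (by norm_num)
      set D : ℝ := (1 + x^2) * (1 + y^2) * (1 + z^2) with hDdef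
      have hD1 : 1 ≤ D := by
        rw [hDdef]
        nlinarith [sq_nonneg x, sq_nonneg y, sq_nonneg z,
          mul_nonneg (sq_nonneg x) (sq_nonneg y), mul_nonneg (sq_nonneg y) (sq_nonneg z),
          mul_nonneg (sq_nonneg x) (sq_nonneg z),
          mul_nonneg (mul_nonneg (sq_nonneg x) (sq_nonneg y)) (sq_nonneg z)]
      have hDpos : 0 < D := by linarith
      have hDle : D ≤ Real.exp (3*t) := by
        have h1t : (0:ℝ) ≤ 1 + t := by linarith
        have hcube : D ≤ (1+t)^3 := by
          rw [hDdef, show ((1+t)^3 : ℝ) = (1+t)*(1+t)*(1+t) by ring]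
          gcongr <;> first | positivity | linarith
        have he : (1+t)^3 ≤ (Real.exp t)^3 := by
          apply pow_le_pow_left₀ h1t
          linarith [Real.add_one_le_exp t]
        calc D ≤ (1+t)^3 := hcube
          _ ≤ (Real.exp t)^3 := he
          _ = Real.exp (3*t) := by rw [← Real.exp_nat_mul]; norm_num
      set sn := Real.sin (S n / 2) with hsndef
      set s0 := Real.sin (S 0 / 2) with hs0def
      have hsnpos := hsin n
      have hs0pos := hsin 0
      constructor
      · -- lower bound
        rw [hr]
        have step1 : (1/16) * sn^2 * Real.exp (-(3*t)) ≤ (1/16) * sn^2 / D := by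
          rw [Real.exp_neg, div_eq_mul_inv]
          have : (Real.exp (3*t))⁻¹ ≤ D⁻¹ := by
            apply inv_anti₀ hDpos hDle
          have hnn : (0:ℝ) ≤ (1/16) * sn^2 := by positivity
          exact mul_le_mul_of_nonneg_left this hnn
        have step2 : (1/16:ℝ)^(n+1) * Real.exp (-(1 - t)) * s0^2
            ≤ (1/16) * sn^2 * Real.exp (-(3*t)) := by
          have h4 : (1/4:ℝ)^n = 4*t := by rw [htdef]; ring
          have hexp : Real.exp (-(1 - (1/4:ℝ)^n)) * Real.exp (-(3*t))
              = Real.exp (-(1-t)) := by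
            rw [← Real.exp_add]; congr 1; rw [h4]; ring
          have := mul_le_mul_of_nonneg_right ih.1 (Real.exp_pos (-(3*t))).le
          calc (1/16:ℝ)^(n+1) * Real.exp (-(1 - t)) * s0^2
              = (1/16) * ((1/16:ℝ)^n * Real.exp (-(1 - (1/4:ℝ)^n)) * s0^2
                  * Real.exp (-(3*t))) := by rw [← hexp]; ring
            _ ≤ (1/16) * (sn^2 * Real.exp (-(3*t))) := by
                apply mul_le_mul_of_nonneg_left this (by norm_num)
            _ = (1/16) * sn^2 * Real.exp (-(3*t)) := by ring
        linarith
      · -- upper bound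
        rw [hr]
        have step1 : (1/16) * sn^2 / D ≤ (1/16) * sn^2 :=
          div_le_self (by positivity) hD1
        have step2 : (1/16:ℝ) * sn^2 ≤ (1/16:ℝ)^(n+1) * s0^2 := by
          have := mul_le_mul_of_nonneg_left ih.2 (show (0:ℝ) ≤ 1/16 by norm_num)
          calc (1/16:ℝ) * sn^2 ≤ (1/16) * ((1/16:ℝ)^n * s0^2) := this
            _ = (1/16:ℝ)^(n+1) * s0^2 := by ring
        linarith
  intro n
  obtain ⟨klo, kup⟩ := key n
  have hsnpos := hsin n
  have hs0pos := hsin 0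
  have hpow : (1/16:ℝ)^n = ((1/4:ℝ)^n)^2 := by
    rw [show (1/16:ℝ) = (1/4:ℝ)^2 by norm_num, pow_right_comm]
  have hdiv : (1 / 4 ^ n : ℝ) = (1/4:ℝ)^n := by rw [div_pow]; norm_num
  have hupos : (0:ℝ) < (1/4:ℝ)^n := by positivity
  have hsqrt : 1 / Real.sqrt (Real.exp 1) = Real.exp (-(1/2 : ℝ)) := by
    have h1 : Real.exp 1 = (Real.exp (1/2 : ℝ))^2 := by
      rw [sq, ← Real.exp_add]; norm_num
    rw [h1, Real.sqrt_sq (Real.exp_pos _).le, Real.exp_neg, one_div]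
  constructor
  · rw [hsqrt, hdiv]
    have hexple : Real.exp (-(1:ℝ)) ≤ Real.exp (-(1 - (1/4:ℝ)^n)) := by
      apply Real.exp_le_exp.2; nlinarith [hupos]
    have h1 : (Real.exp (-(1/2:ℝ)))^2 = Real.exp (-(1:ℝ)) := by
      rw [sq, ← Real.exp_add]; norm_num
    have hlow : (Real.exp (-(1/2:ℝ)) * (1/4:ℝ)^n * Real.sin (S 0/2))^2
        ≤ (Real.sin (S n/2))^2 := by
      have : (1/16:ℝ)^n * Real.exp (-(1:ℝ)) * (Real.sin (S 0/2))^2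
          ≤ (1/16:ℝ)^n * Real.exp (-(1 - (1/4:ℝ)^n)) * (Real.sin (S 0/2))^2 := by
        apply mul_le_mul_of_nonneg_right _ (sq_nonneg _)
        exact mul_le_mul_of_nonneg_left hexple (by positivity)
      calc (Real.exp (-(1/2:ℝ)) * (1/4:ℝ)^n * Real.sin (S 0/2))^2
          = (1/16:ℝ)^n * Real.exp (-(1:ℝ)) * (Real.sin (S 0/2))^2 := by
            rw [hpow, ← h1]; ring
        _ ≤ (1/16:ℝ)^n * Real.exp (-(1 - (1/4:ℝ)^n)) * (Real.sin (S 0/2))^2 := this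
        _ ≤ (Real.sin (S n/2))^2 := klo
    have hnn : (0:ℝ) ≤ Real.exp (-(1/2:ℝ)) * (1/4:ℝ)^n * Real.sin (S 0/2) := by
      positivity
    have := Real.sqrt_le_sqrt hlow
    rwa [Real.sqrt_sq hnn, Real.sqrt_sq hsnpos.le] at this
  · rw [hdiv]
    have hup : (Real.sin (S n/2))^2 ≤ ((1/4:ℝ)^n * Real.sin (S 0/2))^2 := by
      calc (Real.sin (S n/2))^2 ≤ (1/16:ℝ)^n * (Real.sin (S 0/2))^2 := kup
        _ = ((1/4:ℝ)^n * Real.sin (S 0/2))^2 := by rw [hpow]; ring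
    have hnn : (0:ℝ) ≤ (1/4:ℝ)^n * Real.sin (S 0/2) := by positivity
    have := Real.sqrt_le_sqrt hup
    rwa [Real.sqrt_sq hsnpos.le, Real.sqrt_sq hnn] at this
end

section
/- Let S : ℕ → (0, π) and a, b, c : ℕ → (0, ∞) be sequences such that for every n ≥ 1: sinh(a_n/2) < 2^{-n}, sinh(b_n/2) < 2^{-n}, sinh(c_n/2) < 2^{-n}, and (sin(S_n/2))² = (1/16)·(sin(S_{n-1}/2))² / ((1 + sinh²(a_n/2))·(1 + sinh²(b_n/2))·(1 + sinh²(c_n/2))). Then the sequence n ↦ 4ⁿ·sin(S_n/2)/sin(S_0/2) converges, and its limit lies in the open interval (1/√e, √e). -/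
open Real Filter

set_option maxHeartbeats 1000000 in
/-- The Corollary following Proposition 2.3: the sequence `4ⁿ·sin(Sₙ/2)/sin(S₀/2)`
converges, with limit in the open interval `(1/√e, √e)`. -/
theorem middle_triangle_area_ratio_converges
    (S a b c : ℕ → ℝ)
    (hS : ∀ n, S n ∈ Set.Ioo 0 Real.pi)
    (hapos : ∀ n, 0 < a n) (hbpos : ∀ n, 0 < b n) (hcpos : ∀ n, 0 < c n)
    (hadec : ∀ n : ℕ, 1 ≤ n → Real.sinh (a n / 2) < (1 / 2) ^ n)
    (hbdec : ∀ n : ℕ, 1 ≤ n → Real.sinh (b n / 2) < (1 / 2) ^ n)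
    (hcdec : ∀ n : ℕ, 1 ≤ n → Real.sinh (c n / 2) < (1 / 2) ^ n)
    (hrec : ∀ n : ℕ, 1 ≤ n →
      (Real.sin (S n / 2)) ^ 2
        = (1 / 16) * (Real.sin (S (n - 1) / 2)) ^ 2 /
            ((1 + Real.sinh (a n / 2) ^ 2) * (1 + Real.sinh (b n / 2) ^ 2)
              * (1 + Real.sinh (c n / 2) ^ 2))) :
    ∃ L : ℝ,
      Tendsto (fun n : ℕ => 4 ^ n * Real.sin (S n / 2) / Real.sin (S 0 / 2)) atTop (nhds L) ∧
        L ∈ Set.Ioo (1 / Real.sqrt (Real.exp 1)) (Real.sqrt (Real.exp 1)) := by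
  set D : ℕ → ℝ := fun n =>
    (1 + Real.sinh (a n / 2) ^ 2) * (1 + Real.sinh (b n / 2) ^ 2)
      * (1 + Real.sinh (c n / 2) ^ 2) with hDdef
  have hD1 : ∀ n, 1 ≤ D n := by
    intro n
    have h1 := sq_nonneg (Real.sinh (a n / 2))
    have h2 := sq_nonneg (Real.sinh (b n / 2))
    have h3 := sq_nonneg (Real.sinh (c n / 2))
    show (1:ℝ) ≤ (1 + Real.sinh (a n / 2) ^ 2) * (1 + Real.sinh (b n / 2) ^ 2)
      * (1 + Real.sinh (c n / 2) ^ 2)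
    nlinarith [mul_nonneg h1 h2, mul_nonneg (mul_nonneg h1 h2) h3]
  have hDpos : ∀ n, 0 < D n := fun n => lt_of_lt_of_le one_pos (hD1 n)
  have hsin : ∀ n, 0 < Real.sin (S n / 2) := by
    intro n
    have h := hS n
    exact Real.sin_pos_of_pos_of_lt_pi (by linarith [h.1]) (by linarith [h.2, Real.pi_pos])
  -- the key step relation
  have hstep : ∀ n : ℕ,
      Real.sin (S (n+1) / 2) = Real.sin (S n / 2) / (4 * Real.sqrt (D (n+1))) := by
    intro n
    have h := hrec (n+1) (by omega)
    simp only [Nat.add_sub_cancel] at h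
    have hdenom : (1 + Real.sinh (a (n+1) / 2) ^ 2) * (1 + Real.sinh (b (n+1) / 2) ^ 2)
        * (1 + Real.sinh (c (n+1) / 2) ^ 2) = D (n+1) := rfl
    rw [hdenom] at h
    have hsq : Real.sqrt (D (n+1)) ^ 2 = D (n+1) := Real.sq_sqrt (hDpos (n+1)).le
    have hsqrtpos : 0 < Real.sqrt (D (n+1)) := Real.sqrt_pos.2 (hDpos (n+1))
    have h2 : Real.sin (S (n+1) / 2) ^ 2
        = (Real.sin (S n / 2) / (4 * Real.sqrt (D (n+1)))) ^ 2 := by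
      rw [h, div_pow, mul_pow, hsq]
      rw [div_eq_div_iff (hDpos (n+1)).ne' (by positivity)]
      ring
    have hy : 0 ≤ Real.sin (S n / 2) / (4 * Real.sqrt (D (n+1))) :=
      div_nonneg (hsin n).le (by positivity)
    calc Real.sin (S (n+1) / 2)
        = Real.sqrt (Real.sin (S (n+1) / 2) ^ 2) := (Real.sqrt_sq (hsin (n+1)).le).symm
      _ = Real.sqrt ((Real.sin (S n / 2) / (4 * Real.sqrt (D (n+1)))) ^ 2) := by rw [h2]
      _ = _ := Real.sqrt_sq hy
  -- partial sums of logs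
  set u : ℕ → ℝ := fun n => ∑ k ∈ Finset.range n, (1/2) * Real.log (D (k+1)) with hudef
  have hlognn : ∀ k, 0 ≤ Real.log (D k) := fun k => Real.log_nonneg (hD1 k)
  have humono : Monotone u := by
    apply monotone_nat_of_le_succ
    intro n
    rw [hudef]
    simp only [Finset.sum_range_succ]
    have := hlognn (n+1)
    linarith
  -- the closed form of the sequence
  have hT : ∀ n, 4 ^ n * Real.sin (S n / 2) / Real.sin (S 0 / 2) = Real.exp (-(u n)) := by
    intro n
    induction n with
    | zero => simp [hudef, div_self (hsin 0).ne']
    | succ n ih =>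
      have hsqrtpos : 0 < Real.sqrt (D (n+1)) := Real.sqrt_pos.2 (hDpos (n+1))
      have hsqrt_exp : Real.sqrt (D (n+1)) = Real.exp ((1/2) * Real.log (D (n+1))) := by
        rw [Real.sqrt_eq_rpow, Real.rpow_def_of_pos (hDpos (n+1))]
        ring_nf
      have : (4:ℝ) ^ (n+1) * Real.sin (S (n+1) / 2) / Real.sin (S 0 / 2)
          = (4 ^ n * Real.sin (S n / 2) / Real.sin (S 0 / 2)) * (Real.sqrt (D (n+1)))⁻¹ := by
        rw [hstep n]
        field_simp
        ring
      rw [this, ih, hsqrt_exp, ← Real.exp_neg, ← Real.exp_add, hudef]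
      congr 1
      simp only [Finset.sum_range_succ]
      ring
  -- termwise bounds on the logs
  have hlogD : ∀ k : ℕ, 1 ≤ k → Real.log (D k) ≤ 3 * (1/4) ^ k := by
    intro k hk
    have key : ∀ s : ℝ, 0 ≤ s → s < (1/2:ℝ) ^ k → Real.log (1 + s ^ 2) ≤ (1/4:ℝ) ^ k := by
      intro s hs hlt
      have h1 : Real.log (1 + s ^ 2) ≤ s ^ 2 := by
        have := Real.log_le_sub_one_of_pos (x := 1 + s ^ 2) (by positivity)
        linarith
      have h2 : s ^ 2 ≤ ((1/2:ℝ) ^ k) ^ 2 := by nlinarith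
      have h3 : ((1/2:ℝ) ^ k) ^ 2 = (1/4:ℝ) ^ k := by
        rw [← pow_mul, mul_comm, pow_mul]; norm_num
      linarith
    have hsa : 0 < Real.sinh (a k / 2) := Real.sinh_pos_iff.2 (by linarith [hapos k])
    have hsb : 0 < Real.sinh (b k / 2) := Real.sinh_pos_iff.2 (by linarith [hbpos k])
    have hsc : 0 < Real.sinh (c k / 2) := Real.sinh_pos_iff.2 (by linarith [hcpos k])
    have ha' := key _ hsa.le (hadec k hk)
    have hb' := key _ hsb.le (hbdec k hk)
    have hc' := key _ hsc.le (hcdec k hk)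
    have hsplit : Real.log (D k)
        = Real.log (1 + Real.sinh (a k / 2) ^ 2) + Real.log (1 + Real.sinh (b k / 2) ^ 2)
          + Real.log (1 + Real.sinh (c k / 2) ^ 2) := by
      rw [hDdef]
      rw [Real.log_mul (by positivity) (by positivity),
        Real.log_mul (by positivity) (by positivity)]
    rw [hsplit]; linarith
  -- geometric sum bound
  have hgeom : ∀ m : ℕ, ∑ k ∈ Finset.range m, ((1/4:ℝ)) ^ k ≤ 4/3 := by
    intro m
    rw [geom_sum_eq (by norm_num)]
    have : (0:ℝ) ≤ (1/4:ℝ) ^ m := by positivity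
    rw [div_le_iff_of_neg (by norm_num)]
    linarith
  -- uniform bound on u
  have hubd : ∀ n, u n ≤ (1/2) * Real.log (D 1) + 1/8 := by
    intro n
    match n with
    | 0 =>
      simp only [hudef, Finset.range_zero, Finset.sum_empty]
      have := hlognn 1
      linarith
    | Nat.succ m =>
      have hexp : u (m+1)
          = ∑ k ∈ Finset.range m, (1/2) * Real.log (D (k+1+1)) + (1/2) * Real.log (D (0+1)) :=
        Finset.sum_range_succ' (fun k => (1/2) * Real.log (D (k+1))) m
      rw [hexp]
      have hsum : ∑ k ∈ Finset.range m, (1/2) * Real.log (D (k+1+1)) ≤ 1/8 := by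
        have h1 : ∀ k ∈ Finset.range m, (1/2) * Real.log (D (k+1+1))
            ≤ (3/2) * (1/16) * (1/4:ℝ) ^ k := by
          intro k _
          have := hlogD (k+2) (by omega)
          have heq : ((1/4:ℝ)) ^ (k+2) = (1/16) * (1/4:ℝ) ^ k := by ring
          have : Real.log (D (k+2)) ≤ 3 * ((1/16) * (1/4:ℝ) ^ k) := by rw [← heq]; exact this
          have h2 : k + 1 + 1 = k + 2 := by omega
          rw [h2]
          linarith
        calc ∑ k ∈ Finset.range m, (1/2) * Real.log (D (k+1+1))
            ≤ ∑ k ∈ Finset.range m, (3/2) * (1/16) * (1/4:ℝ) ^ k := Finset.sum_le_sum h1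
          _ = (3/2) * (1/16) * ∑ k ∈ Finset.range m, (1/4:ℝ) ^ k := by
              rw [Finset.mul_sum]
          _ ≤ (3/2) * (1/16) * (4/3) := by
              have := hgeom m
              nlinarith [Finset.sum_le_sum (fun k (_ : k ∈ Finset.range m) =>
                le_refl ((1/4:ℝ)^k))]
          _ = 1/8 := by norm_num
      simp only [Nat.zero_add]
      linarith
  have hbdd : BddAbove (Set.range u) := ⟨(1/2) * Real.log (D 1) + 1/8, by
    rintro x ⟨n, rfl⟩; exact hubd n⟩
  set Lsum : ℝ := ⨆ n, u n with hLsumdef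
  have hconv : Tendsto u atTop (nhds Lsum) := tendsto_atTop_ciSup humono hbdd
  refine ⟨Real.exp (-Lsum), ?_, ?_, ?_⟩
  · have : Tendsto (fun n => Real.exp (-(u n))) atTop (nhds (Real.exp (-Lsum))) :=
      (Real.continuous_exp.tendsto _).comp (hconv.neg)
    exact this.congr (fun n => (hT n).symm)
  · -- lower bound: exp(-Lsum) > 1/√e, need Lsum < 1/2
    have hLsumlt : Lsum < 1/2 := by
      have hub : Lsum ≤ (1/2) * Real.log (D 1) + 1/8 :=
        ciSup_le hubd
      have hD1lt : Real.log (D 1) < 3/4 := by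
        have := hlogD 1 le_rfl
        have hsa : 0 < Real.sinh (a 1 / 2) := Real.sinh_pos_iff.2 (by linarith [hapos 1])
        -- need strict: log D1 ≤ s² sum, each s² < 1/4 strictly
        have key : ∀ s : ℝ, 0 ≤ s → s < (1/2:ℝ) → Real.log (1 + s ^ 2) < (1/4:ℝ) := by
          intro s hs hlt
          have h1 : Real.log (1 + s ^ 2) ≤ s ^ 2 := by
            have := Real.log_le_sub_one_of_pos (x := 1 + s ^ 2) (by positivity)
            linarith
          nlinarith
        have ha1 := hadec 1 le_rfl
        have hb1 := hbdec 1 le_rfl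
        have hc1 := hcdec 1 le_rfl
        norm_num at ha1 hb1 hc1
        have hsb : 0 < Real.sinh (b 1 / 2) := Real.sinh_pos_iff.2 (by linarith [hbpos 1])
        have hsc : 0 < Real.sinh (c 1 / 2) := Real.sinh_pos_iff.2 (by linarith [hcpos 1])
        have hA := key _ hsa.le ha1
        have hB := key _ hsb.le hb1
        have hC := key _ hsc.le hc1
        have hsplit : Real.log (D 1)
            = Real.log (1 + Real.sinh (a 1 / 2) ^ 2) + Real.log (1 + Real.sinh (b 1 / 2) ^ 2)
              + Real.log (1 + Real.sinh (c 1 / 2) ^ 2) := by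
          rw [hDdef]
          rw [Real.log_mul (by positivity) (by positivity),
            Real.log_mul (by positivity) (by positivity)]
        rw [hsplit]; linarith
      linarith
    have hsqrt : Real.sqrt (Real.exp 1) = Real.exp (1/2) := by
      have h : Real.exp (1/2) ^ 2 = Real.exp 1 := by
        rw [← Real.exp_nat_mul]; norm_num
      rw [← h, Real.sqrt_sq (Real.exp_pos _).le]
    rw [hsqrt, one_div, ← Real.exp_neg]
    exact Real.exp_lt_exp.2 (by linarith)
  · -- upper bound: exp(-Lsum) ≤ 1 < √e
    have hLsum0 : 0 ≤ Lsum := by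
      have : u 0 ≤ Lsum := le_ciSup hbdd 0
      simp [hudef] at this
      exact this
    have h1 : Real.exp (-Lsum) ≤ 1 := by
      rw [← Real.exp_zero]
      exact Real.exp_le_exp.2 (by linarith)
    have h2 : (1:ℝ) < Real.sqrt (Real.exp 1) := by
      rw [show (1:ℝ) = Real.sqrt 1 by simp]
      exact Real.sqrt_lt_sqrt (by norm_num) (by simpa using Real.one_lt_exp_iff_of_pos one_pos |>.mpr one_pos)
    linarith
end
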